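/- arXiv:0708.4190 — 8 statements merged into one kernel-verified Lean document; each statement's English description precedes it below -/
import Mathlib

section
/- Let τ be a twisted 1-cocycle of G with values in R^A. Then τ is a coboundary if and only if τ(g)(a) = 0 for every g ∈ G and every a ∈ A with g • a = a. -/
/-- Let `G` be an abelian group acting on a finite set `A` and `R` an abelian
group.  A twisted 1-cocycle `τ : G → (A → R)` is a coboundary if and only if
`τ g a = 0` for every `g ∈ G` and `a ∈ A` with `g • a = a`. -/
theorem coboundary_iff_vanishes_on_fixed_points
    {G A R : Type*} [AddCommGroup G] [Fintype A] [AddAction G A] [AddCommGroup R]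
    (τ : G → A → R)
    (hτ : ∀ (g h : G) (a : A), τ (g + h) a = τ g (h +ᵥ a) + τ h a) :
    (∃ c : A → R, ∀ (g : G) (a : A), τ g a = c (g +ᵥ a) - c a) ↔
      (∀ (g : G) (a : A), g +ᵥ a = a → τ g a = 0) := by
  classical
  constructor
  · rintro ⟨c, hc⟩ g a ha
    rw [hc, ha, sub_self]
  · intro hfix
    have key : ∀ (g h : G) (a : A), g +ᵥ a = h +ᵥ a → τ g a = τ h a := by
      intro g h a hgh
      have h1 := hτ (g - h) h a
      rw [sub_add_cancel] at h1
      have h2 : (g - h) +ᵥ (h +ᵥ a) = h +ᵥ a := by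
        rw [← add_vadd, sub_add_cancel, hgh]
      rw [hfix _ _ h2, zero_add] at h1
      exact h1
    set r : A → A := fun a => Quotient.out (Quotient.mk (AddAction.orbitRel G A) a) with hrdef
    have hr : ∀ a : A, ∃ g : G, g +ᵥ r a = a := by
      intro a
      have h := Quotient.mk_out (s := AddAction.orbitRel G A) a
      rw [AddAction.orbitRel_apply] at h
      obtain ⟨g, hg⟩ := h
      exact ⟨-g, by rw [hrdef]; simp only []; rw [← hg]; rw [← add_vadd, neg_add_cancel, zero_vadd]⟩
    have hrvadd : ∀ (g : G) (a : A), r (g +ᵥ a) = r a := by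
      intro g a
      have : Quotient.mk (AddAction.orbitRel G A) (g +ᵥ a)
          = Quotient.mk (AddAction.orbitRel G A) a := by
        apply Quotient.sound
        exact AddAction.mem_orbit a g
      simp only [hrdef, this]
    refine ⟨fun a => τ (Classical.choose (hr a)) (r a), ?_⟩
    intro g a
    show τ g a = τ (Classical.choose (hr (g +ᵥ a))) (r (g +ᵥ a))
        - τ (Classical.choose (hr a)) (r a)
    obtain ⟨k, hk, hka⟩ : ∃ k, k = Classical.choose (hr a) ∧ k +ᵥ r a = a :=
      ⟨_, rfl, Classical.choose_spec (hr a)⟩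
    obtain ⟨m, hm, hma⟩ : ∃ m, m = Classical.choose (hr (g +ᵥ a)) ∧
        m +ᵥ r (g +ᵥ a) = g +ᵥ a := ⟨_, rfl, Classical.choose_spec (hr (g +ᵥ a))⟩
    rw [← hk, ← hm, hrvadd g a]
    rw [hrvadd g a] at hma
    have hmeq : τ m (r a) = τ (g + k) (r a) := by
      apply key
      rw [hma, add_vadd, hka]
    rw [hmeq, hτ g k (r a), hka]
    abel
end

section
/- Since G is abelian, the stabilizer subgroup G_a = {g ∈ G | g • a = a} depends only on the orbit of a ∈ A. Suppose that for each orbit O of the action of G on A we are given a group homomorphism ε_O : G_O → ℂˣ, where G_O denotes the common stabilizer of the points of O. Then there exists a twisted 1-cocycle δ : G → (A → ℂˣ) such that δ(g)(a) = ε_{[a]}(g) for every a ∈ A and every g ∈ G with g • a = a, where [a] is the orbit of a. -/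
/-- Since `G` is abelian, the stabilizer depends only on the orbit.
Given, for each point `a` (depending only on its orbit), a group homomorphism
`ε a : Stab(a) → ℂˣ`, there exists a twisted 1-cocycle `δ : G → (A → ℂˣ)` with
`δ g a = ε a g` whenever `g +ᵥ a = a`. -/
theorem exists_cocycle_with_prescribed_stabilizer_characters
    {G A : Type*} [AddCommGroup G] [Fintype A] [AddAction G A]
    (ε : ∀ a : A, Multiplicative ↥(AddAction.stabilizer G a) →* ℂˣ)
    (hε : ∀ (a : A) (h g : G) (hg : g ∈ AddAction.stabilizer G a)
        (hg' : g ∈ AddAction.stabilizer G (h +ᵥ a)),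
        ε (h +ᵥ a) (Multiplicative.ofAdd ⟨g, hg'⟩) = ε a (Multiplicative.ofAdd ⟨g, hg⟩)) :
    ∃ δ : G → A → ℂˣ,
      (∀ (g h : G) (a : A), δ (g + h) a = δ g (h +ᵥ a) * δ h a) ∧
      ∀ (a : A) (g : G) (hg : g ∈ AddAction.stabilizer G a),
        δ g a = ε a (Multiplicative.ofAdd ⟨g, hg⟩) := by
  classical
  -- representative of each orbit
  set rep : A → A := fun a => (Quotient.mk (AddAction.orbitRel G A) a).out with hrep
  have hrepv : ∀ (g : G) (a : A), rep (g +ᵥ a) = rep a := by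
    intro g a
    have : (Quotient.mk (AddAction.orbitRel G A) (g +ᵥ a)) =
        Quotient.mk (AddAction.orbitRel G A) a := Quotient.sound ⟨g, rfl⟩
    simp [hrep, this]
  have hmem : ∀ a : A, ∃ g : G, g +ᵥ a = rep a := by
    intro a
    have h : rep a ∈ AddAction.orbit G a := Quotient.mk_out (s := AddAction.orbitRel G A) a
    exact h
  choose t ht using hmem
  have hstab : ∀ (g : G) (a : A),
      t (g +ᵥ a) + g - t a ∈ AddAction.stabilizer G (rep a) := by
    intro g a
    rw [AddAction.mem_stabilizer_iff]
    calc (t (g +ᵥ a) + g - t a) +ᵥ rep a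
        = (t (g +ᵥ a) + g - t a) +ᵥ (t a +ᵥ a) := by rw [ht a]
      _ = (t (g +ᵥ a) + g - t a + t a) +ᵥ a := by rw [vadd_vadd]
      _ = (t (g +ᵥ a) + g) +ᵥ a := by rw [sub_add_cancel]
      _ = t (g +ᵥ a) +ᵥ (g +ᵥ a) := by rw [vadd_vadd]
      _ = rep (g +ᵥ a) := ht _
      _ = rep a := hrepv g a
  refine ⟨fun g a => ε (rep a)
      (Multiplicative.ofAdd ⟨t (g +ᵥ a) + g - t a, hstab g a⟩), ?_, ?_⟩
  · intro g h a
    have hrepha : rep (h +ᵥ a) = rep a := hrepv h a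
    have key : (⟨t ((g + h) +ᵥ a) + (g + h) - t a, hstab (g + h) a⟩ :
        AddAction.stabilizer G (rep a)) =
        ⟨t (g +ᵥ (h +ᵥ a)) + g - t (h +ᵥ a), hrepha ▸ hstab g (h +ᵥ a)⟩ +
        ⟨t (h +ᵥ a) + h - t a, hstab h a⟩ := by
      ext
      simp only [AddSubgroup.coe_add]
      rw [vadd_vadd]
      abel
    beta_reduce
    rw [key, ofAdd_add, map_mul]
    have hcongr : ∀ (b c : A) (_ : b = c) (x : G) (hx : x ∈ AddAction.stabilizer G b)
        (hx' : x ∈ AddAction.stabilizer G c),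
        ε b (Multiplicative.ofAdd ⟨x, hx⟩) = ε c (Multiplicative.ofAdd ⟨x, hx'⟩) := by
      rintro b c rfl x hx hx'
      rfl
    congr 1
    exact hcongr _ _ hrepha.symm _ _ _
  · intro a g hg
    have ha : g +ᵥ a = a := hg
    have hcongr : ∀ (b c : A) (_ : b = c) (x : G) (hx : x ∈ AddAction.stabilizer G b)
        (hx' : x ∈ AddAction.stabilizer G c),
        ε b (Multiplicative.ofAdd ⟨x, hx⟩) = ε c (Multiplicative.ofAdd ⟨x, hx'⟩) := by
      rintro b c rfl x hx hx'
      rfl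
    have hgr : g ∈ AddAction.stabilizer G (rep a) := by
      rw [AddAction.mem_stabilizer_iff, ← ht a, vadd_comm, ha]
    have key : (⟨t (g +ᵥ a) + g - t a, hstab g a⟩ :
        AddAction.stabilizer G (rep a)) = ⟨g, hgr⟩ := by
      ext
      simp [ha]
    beta_reduce
    rw [key]
    have hba : (-(t a)) +ᵥ rep a = a := by
      rw [← ht a, vadd_vadd, neg_add_cancel, zero_vadd]
    have hg2 : g ∈ AddAction.stabilizer G ((-(t a)) +ᵥ rep a) := by
      rw [AddAction.mem_stabilizer_iff, hba, ha]
    calc ε (rep a) (Multiplicative.ofAdd ⟨g, hgr⟩)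
        = ε ((-(t a)) +ᵥ rep a) (Multiplicative.ofAdd ⟨g, hg2⟩) :=
          (hε (rep a) (-(t a)) g hgr hg2).symm
      _ = ε a (Multiplicative.ofAdd ⟨g, hg⟩) := hcongr _ _ hba _ _ _
end

section
/- Assume Γ is unitrivalent. The quotient of the abelian group of twisted 1-cocycles (under pointwise multiplication) by the subgroup of coboundaries is isomorphic, as an abelian group, to the product over all orbits O of the action of Z(Γ) on QCG_k(Γ; j') of the character groups Hom(Stab(O), ℂˣ), where Stab(O) = {λ ∈ Z(Γ) | λ·j = j} for any j ∈ O (this subgroup is independent of the choice of j ∈ O because Z(Γ) is abelian). -/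
open scoped BigOperators

set_option linter.unusedSectionVars false
set_option linter.unreachableTactic false
set_option linter.unusedTactic false

variable {V E : Type*} [Fintype V] [Fintype E] [DecidableEq V] [DecidableEq E]

/-- The multiset of edge-ends at a vertex `v`: each edge `e` contributes one end for
`s e = v` and one end for `t e = v`, so a loop at `v` contributes twice. -/
def endsAt (s t : E → V) (v : V) : Multiset E :=
  (Finset.univ.filter fun e => s e = v).val + (Finset.univ.filter fun e => t e = v).val

/-- The degree of a vertex (a loop counts twice). -/
def degree (s t : E → V) (v : V) : ℕ := Multiset.card (endsAt s t v)

/-- A graph is unitrivalent if every vertex has degree `1` or `3`. -/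
def Unitrivalent (s t : E → V) : Prop := ∀ v, degree s t v = 1 ∨ degree s t v = 3

/-- The cycle space `Z(Γ)`: the `ZMod 2`-valued functions on edges whose total value over
the edge-ends at every vertex is `0`.  It plays the role of `H₁(Γ; ℤ/2)`. -/
def cycleSpace (s t : E → V) : AddSubgroup (E → ZMod 2) where
  carrier := {x | ∀ v, ((endsAt s t v).map x).sum = 0}
  zero_mem' := by intro v; simp
  add_mem' := by
    intro a b ha hb v
    have h : ((endsAt s t v).map (a + b)).sum
        = ((endsAt s t v).map a).sum + ((endsAt s t v).map b).sum := by
      rw [show ((a + b : E → ZMod 2)) = fun e => a e + b e from rfl]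
      rw [Multiset.sum_map_add]
    rw [h, ha v, hb v, add_zero]
  neg_mem' := by
    intro a ha v
    have h : (-a : E → ZMod 2) = a := funext fun e => by
      have h2 : ∀ x : ZMod 2, -x = x := by decide
      exact h2 (a e)
    rw [h]; exact ha v

/-- A weight of level `k`: each edge gets a value in `{0, 1/2, 1, …, k/2}`. -/
def IsWeight (k : ℕ) (j : E → ℚ) : Prop := ∀ f, ∃ m : ℕ, m ≤ k ∧ j f = (m : ℚ) / 2

/-- The set `QCG_k(Γ; j')` of admissible weights of level `k` with boundary values `j'`:
weights agreeing with `j'` on edges with a univalent endpoint and satisfying the quantum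
Clebsch–Gordan condition at every trivalent vertex (a loop contributes its weight twice;
the condition `2x ≤ a+b+c` for each of the three end-weights `x` is the triangle
inequality). -/
def QCG (s t : E → V) (k : ℕ) (j' : E → ℚ) : Set (E → ℚ) :=
  {j | IsWeight k j ∧
    (∀ f, (degree s t (s f) = 1 ∨ degree s t (t f) = 1) → j f = j' f) ∧
    (∀ v, degree s t v = 3 →
      (∃ m : ℤ, ((endsAt s t v).map j).sum = (m : ℚ)) ∧
      (∀ x ∈ (endsAt s t v).map j, 2 * x ≤ ((endsAt s t v).map j).sum) ∧
      ((endsAt s t v).map j).sum ≤ (k : ℚ))}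

/-- The action of a cycle `lam` on a weight `j`:
`(lam · j) f = k/2 - j f` if `lam f = 1` and `(lam · j) f = j f` otherwise. -/
def actW (k : ℕ) (lam : E → ZMod 2) (j : E → ℚ) : E → ℚ :=
  fun f => if lam f = 1 then (k : ℚ) / 2 - j f else j f

theorem actW_zero (k : ℕ) (j : E → ℚ) : actW k (0 : E → ZMod 2) j = j := by
  funext f
  simp [actW]

theorem actW_add (k : ℕ) (l l' : E → ZMod 2) (j : E → ℚ) :
    actW k (l + l') j = actW k l (actW k l' j) := by
  funext f
  have h : ∀ x : ZMod 2, x = 0 ∨ x = 1 := by decide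
  simp only [actW, Pi.add_apply]
  rcases h (l f) with h1 | h1 <;> rcases h (l' f) with h2 | h2 <;>
    simp [h1, h2] <;> ring

theorem add_self_zmod2 (l : E → ZMod 2) : l + l = 0 := by
  funext f
  have h : ∀ x : ZMod 2, x + x = 0 := by decide
  exact h (l f)

/-- A vertex `v` lies on the cycle `lam` if some edge of `lam` has `v` as an endpoint. -/
def LiesOn (s t : E → V) (lam : E → ZMod 2) (v : V) : Prop :=
  ∃ e, lam e = 1 ∧ (s e = v ∨ t e = v)

/-- An edge `f` is `lam`-external if `lam` does not pass through `f` and exactly one of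
its endpoints lies on `lam`. -/
def IsExternal (s t : E → V) (lam : E → ZMod 2) (f : E) : Prop :=
  lam f = 0 ∧ Xor' (LiesOn s t lam (s f)) (LiesOn s t lam (t f))

/-- `Ex(lam)`: the finite set of `lam`-external edges. -/
noncomputable def Ex (s t : E → V) (lam : E → ZMod 2) : Finset E :=
  letI := Classical.decPred (IsExternal s t lam)
  Finset.univ.filter (IsExternal s t lam)

/-- A twisted 1-cocycle `δ : Z(Γ) → (QCG_k(Γ; j') → ℂˣ)` (encoded as a function on all of
`(E → ZMod 2) × (E → ℚ)`, constrained only on `Z(Γ) × QCG_k(Γ; j')`). -/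
def IsCocycle (s t : E → V) (k : ℕ) (j' : E → ℚ)
    (δ : (E → ZMod 2) → (E → ℚ) → ℂˣ) : Prop :=
  ∀ lam ∈ cycleSpace s t, ∀ lam' ∈ cycleSpace s t, ∀ j ∈ QCG s t k j',
    δ (lam + lam') j = δ lam (actW k lam' j) * δ lam' j

/-- A coboundary. -/
def IsCoboundary (s t : E → V) (k : ℕ) (j' : E → ℚ)
    (δ : (E → ZMod 2) → (E → ℚ) → ℂˣ) : Prop :=
  ∃ c : (E → ℚ) → ℂˣ, ∀ lam ∈ cycleSpace s t, ∀ j ∈ QCG s t k j',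
    δ lam j = c (actW k lam j) * (c j)⁻¹

/-- The external edge condition. -/
def ExtCond (s t : E → V) (k : ℕ) (j' : E → ℚ)
    (δ : (E → ZMod 2) → (E → ℚ) → ℂˣ) : Prop :=
  ∀ lam ∈ cycleSpace s t, ∀ j ∈ QCG s t k j', actW k lam j = j →
    (δ lam j : ℂ) =
      Complex.exp (Real.pi * Complex.I * ((∑ f ∈ Ex s t lam, j f : ℚ) : ℂ))

/-- The stabilizer `Stab(j) = {lam ∈ Z(Γ) | lam · j = j}`, as a subgroup of the group of
`ZMod 2`-valued functions on edges. -/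
def stab (s t : E → V) (k : ℕ) (j : E → ℚ) : AddSubgroup (E → ZMod 2) where
  carrier := {lam | lam ∈ cycleSpace s t ∧ actW k lam j = j}
  zero_mem' := ⟨(cycleSpace s t).zero_mem, actW_zero k j⟩
  add_mem' := by
    rintro a b ⟨ha1, ha2⟩ ⟨hb1, hb2⟩
    exact ⟨add_mem ha1 hb1, by rw [actW_add, hb2, ha2]⟩
  neg_mem' := by
    rintro a ⟨ha1, ha2⟩
    have h : (-a : E → ZMod 2) = a := funext fun e => by
      have h2 : ∀ x : ZMod 2, -x = x := by decide
      exact h2 (a e)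
    rw [h]
    exact ⟨ha1, ha2⟩

/-- The abelian group of twisted 1-cocycles under pointwise multiplication. -/
def Coc (s t : E → V) (k : ℕ) (j' : E → ℚ) :
    Subgroup ((E → ZMod 2) → (E → ℚ) → ℂˣ) where
  carrier := {δ | IsCocycle s t k j' δ}
  one_mem' := by intro lam _ lam' _ j _; simp
  mul_mem' := by
    intro δ₁ δ₂ h1 h2 lam hlam lam' hlam' j hj
    simp only [Pi.mul_apply]
    rw [h1 lam hlam lam' hlam' j hj, h2 lam hlam lam' hlam' j hj, mul_mul_mul_comm]
  inv_mem' := by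
    intro δ h lam hlam lam' hlam' j hj
    simp only [Pi.inv_apply]
    rw [h lam hlam lam' hlam' j hj, mul_inv]

/-- The subgroup of coboundaries inside the group of twisted 1-cocycles. -/
def Cob (s t : E → V) (k : ℕ) (j' : E → ℚ) : Subgroup ↥(Coc s t k j') where
  carrier := {δ | IsCoboundary s t k j' (δ : (E → ZMod 2) → (E → ℚ) → ℂˣ)}
  one_mem' := ⟨1, by intro lam _ j _; simp⟩
  mul_mem' := by
    rintro δ₁ δ₂ ⟨c₁, h1⟩ ⟨c₂, h2⟩
    refine ⟨c₁ * c₂, fun lam hlam j hj => ?_⟩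
    have e1 := h1 lam hlam j hj
    have e2 := h2 lam hlam j hj
    simp only [Subgroup.coe_mul, Pi.mul_apply, mul_inv] at *
    rw [e1, e2, mul_mul_mul_comm]
  inv_mem' := by
    rintro δ ⟨c, h⟩
    refine ⟨c⁻¹, fun lam hlam j hj => ?_⟩
    have e := h lam hlam j hj
    simp only [Subgroup.coe_inv, Pi.inv_apply, mul_inv, inv_inv] at *
    rw [e, mul_inv, inv_inv]

/-- Two admissible weights are equivalent if they lie in the same orbit of the action of
the cycle space. -/
def orbitSetoid (s t : E → V) (k : ℕ) (j' : E → ℚ) : Setoid ↥(QCG s t k j') where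
  r j₁ j₂ := ∃ lam ∈ cycleSpace s t, actW k lam (j₁ : E → ℚ) = (j₂ : E → ℚ)
  iseqv := by
    constructor
    · intro j
      exact ⟨0, (cycleSpace s t).zero_mem, actW_zero k _⟩
    · rintro j₁ j₂ ⟨lam, hlam, h⟩
      exact ⟨lam, hlam, by rw [← h, ← actW_add, add_self_zmod2, actW_zero]⟩
    · rintro j₁ j₂ j₃ ⟨l1, h1, e1⟩ ⟨l2, h2, e2⟩
      exact ⟨l2 + l1, add_mem h2 h1, by rw [actW_add, e1, e2]⟩

theorem stab_congr (s t : E → V) (k : ℕ) (j₁ j₂ : E → ℚ)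
    (lam : E → ZMod 2) (h : actW k lam j₁ = j₂) :
    stab s t k j₁ = stab s t k j₂ := by
  have hinv : actW k lam j₂ = j₁ := by
    rw [← h, ← actW_add, add_self_zmod2, actW_zero]
  ext mu
  constructor
  · rintro ⟨h1, h2⟩
    exact ⟨h1, by rw [← h, ← actW_add, add_comm, actW_add, h2, h]⟩
  · rintro ⟨h1, h2⟩
    exact ⟨h1, by rw [← hinv, ← actW_add, add_comm, actW_add, h2, hinv]⟩

/-- The common stabilizer of the points of an orbit `O` (well defined since the acting
group is abelian). -/
def stabOrbit (s t : E → V) (k : ℕ) (j' : E → ℚ)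
    (O : Quotient (orbitSetoid s t k j')) : AddSubgroup (E → ZMod 2) :=
  Quotient.liftOn O (fun j => stab s t k (j : E → ℚ)) (by
    rintro j₁ j₂ ⟨lam, hlam, h⟩
    exact stab_congr s t k _ _ lam h)

/-!
Restricted to the stabilizer of a point `j`, a twisted cocycle is a character, since
`δ_j(μ + ν) = δ_{ν·j}(μ) δ_j(ν) = δ_j(μ) δ_j(ν)` for `μ, ν ∈ Stab(j)`. Choosing a base point
`b` in each orbit, restriction is a homomorphism to `∏_O Hom(Stab(O), ℂˣ)`. If `δ` is trivial
on all stabilizers then `c(λ·b) := δ_b(λ)` is well defined and `δ` is the coboundary of `c`;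
conversely a coboundary is trivial on stabilizers. Restriction is onto: writing each point
of an orbit as `x = p_x·b`, a character `χ` of `Stab(b)` comes from the cocycle
`δ_x(λ) := χ(p_{λ·x} + λ + p_x)`, the argument stabilizing `b` because every element of
`Z(Γ)` is an involution.
-/

section ExtendByOne

variable {G M : Type*} [AddGroup G] [MulOneClass M] {S : AddSubgroup G}

open Classical in
noncomputable def extendByOne (χ : Multiplicative S →* M) (g : G) : M :=
  if h : g ∈ S then χ (Multiplicative.ofAdd ⟨g, h⟩) else 1

theorem extendByOne_of_mem (χ : Multiplicative S →* M) {g : G} (h : g ∈ S) :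
    extendByOne χ g = χ (Multiplicative.ofAdd ⟨g, h⟩) :=
  dif_pos h

theorem extendByOne_add (χ : Multiplicative S →* M) {a b : G} (ha : a ∈ S) (hb : b ∈ S) :
    extendByOne χ (a + b) = extendByOne χ a * extendByOne χ b := by
  rw [extendByOne_of_mem χ ha, extendByOne_of_mem χ hb, extendByOne_of_mem χ (add_mem ha hb),
    ← map_mul]
  rfl

end ExtendByOne

namespace FirstCohomology

variable {s t : E → V} {k : ℕ} {j' : E → ℚ}

theorem actW_actW_self (l : E → ZMod 2) (j : E → ℚ) : actW k l (actW k l j) = j := by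
  rw [← actW_add, add_self_zmod2, actW_zero]

noncomputable def basePoint (O : Quotient (orbitSetoid s t k j')) : E → ℚ :=
  (Quotient.out O : QCG s t k j')

theorem basePoint_mem (O : Quotient (orbitSetoid s t k j')) : basePoint O ∈ QCG s t k j' :=
  (Quotient.out O).2

theorem stabOrbit_eq_stab_basePoint (O : Quotient (orbitSetoid s t k j')) :
    stabOrbit s t k j' O = stab s t k (basePoint O) := by
  conv_lhs => rw [← Quotient.out_eq O]
  rfl

theorem mem_stab_basePoint {O : Quotient (orbitSetoid s t k j')} {μ : E → ZMod 2}
    (h : μ ∈ stabOrbit s t k j' O) : μ ∈ stab s t k (basePoint O) :=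
  stabOrbit_eq_stab_basePoint O ▸ h

theorem orbit_eq_of_actW_basePoint_eq {O O' : Quotient (orbitSetoid s t k j')}
    {l l' : E → ZMod 2} (hl : l ∈ cycleSpace s t) (hl' : l' ∈ cycleSpace s t)
    (h : actW k l (basePoint O) = actW k l' (basePoint O')) : O = O' := by
  rw [← Quotient.out_eq O, ← Quotient.out_eq O']
  refine Quotient.sound ⟨l' + l, add_mem hl' hl, ?_⟩
  change actW k (l' + l) (basePoint O) = basePoint O'
  rw [actW_add, h, actW_actW_self]

variable (s t k j') in
/-- Points of the form `l·b` with `b` a base point: this contains `l·j` for `j ∈ QCG s t k j'`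
without knowing that the action preserves `QCG s t k j'`. -/
def Reachable (x : E → ℚ) : Prop :=
  ∃ O : Quotient (orbitSetoid s t k j'), ∃ l ∈ cycleSpace s t, actW k l (basePoint O) = x

namespace Reachable

variable {x : E → ℚ} (hx : Reachable s t k j' x)

noncomputable def orbit : Quotient (orbitSetoid s t k j') := hx.choose

noncomputable def path : E → ZMod 2 := hx.choose_spec.choose

theorem path_mem : hx.path ∈ cycleSpace s t := hx.choose_spec.choose_spec.1

theorem actW_path : actW k hx.path (basePoint hx.orbit) = x := hx.choose_spec.choose_spec.2

theorem actW_path_self : actW k hx.path x = basePoint hx.orbit :=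
  (congrArg (actW k hx.path) hx.actW_path).symm.trans (actW_actW_self _ _)

theorem orbit_eq {O : Quotient (orbitSetoid s t k j')} {l : E → ZMod 2}
    (hl : l ∈ cycleSpace s t) (h : actW k l (basePoint O) = x) : hx.orbit = O :=
  orbit_eq_of_actW_basePoint_eq hx.path_mem hl (hx.actW_path.trans h.symm)

theorem path_congr {y : E → ℚ} (hy : Reachable s t k j' y) (h : x = y) : hx.path = hy.path := by
  subst h
  rfl

end Reachable

theorem Reachable.actW {x : E → ℚ} {l : E → ZMod 2} (hx : Reachable s t k j' x)
    (hl : l ∈ cycleSpace s t) : Reachable s t k j' (actW k l x) :=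
  ⟨hx.orbit, l + hx.path, add_mem hl hx.path_mem, by rw [actW_add, hx.actW_path]⟩

theorem Reachable.orbit_actW {x : E → ℚ} {l : E → ZMod 2} (hx : Reachable s t k j' x)
    (hl : l ∈ cycleSpace s t) : (hx.actW hl).orbit = hx.orbit :=
  (hx.actW hl).orbit_eq (add_mem hl hx.path_mem) (by rw [actW_add, hx.actW_path])

theorem Reachable.path_add_add_path_mem {x : E → ℚ} {l : E → ZMod 2}
    (hx : Reachable s t k j' x) (hl : l ∈ cycleSpace s t) :
    (hx.actW hl).path + l + hx.path ∈ stabOrbit s t k j' hx.orbit := by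
  rw [stabOrbit_eq_stab_basePoint]
  refine ⟨add_mem (add_mem (hx.actW hl).path_mem hl) hx.path_mem, ?_⟩
  rw [actW_add, actW_add, hx.actW_path, (hx.actW hl).actW_path_self, hx.orbit_actW hl]

theorem reachable_of_mem {j : E → ℚ} (hj : j ∈ QCG s t k j') : Reachable s t k j' j :=
  ⟨_, Quotient.mk_out (s := orbitSetoid s t k j') ⟨j, hj⟩⟩

theorem IsCocycle.apply_add_of_mem_stab {δ : (E → ZMod 2) → (E → ℚ) → ℂˣ}
    (hδ : IsCocycle s t k j' δ) {j : E → ℚ} (hj : j ∈ QCG s t k j') {l μ : E → ZMod 2}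
    (hl : l ∈ cycleSpace s t) (hμ : μ ∈ stab s t k j) : δ (l + μ) j = δ l j * δ μ j := by
  rw [hδ l hl μ hμ.1 j hj, hμ.2]

theorem IsCoboundary.apply_of_mem_stab {δ : (E → ZMod 2) → (E → ℚ) → ℂˣ}
    (hδ : IsCoboundary s t k j' δ) {j : E → ℚ} (hj : j ∈ QCG s t k j') {μ : E → ZMod 2}
    (hμ : μ ∈ stab s t k j) : δ μ j = 1 := by
  obtain ⟨c, hc⟩ := hδ
  rw [hc μ hμ.1 j hj, hμ.2, mul_inv_cancel]

variable (s t k j') in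
noncomputable def restrictToStab :
    Coc s t k j' →* ∀ O : Quotient (orbitSetoid s t k j'),
      Multiplicative (stabOrbit s t k j' O) →* ℂˣ :=
  MonoidHom.mk' (fun (δ : Coc s t k j') O => MonoidHom.mk'
      (fun μ : Multiplicative (stabOrbit s t k j' O) =>
        δ.1 (Multiplicative.toAdd μ).1 (basePoint O))
      fun μ ν => IsCocycle.apply_add_of_mem_stab δ.2 (basePoint_mem O)
        (mem_stab_basePoint (Multiplicative.toAdd μ).2).1
        (mem_stab_basePoint (Multiplicative.toAdd ν).2))
    fun _ _ => rfl

theorem restrictToStab_apply (δ : Coc s t k j') (O : Quotient (orbitSetoid s t k j'))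
    (μ : Multiplicative (stabOrbit s t k j' O)) :
    restrictToStab s t k j' δ O μ = δ.1 (Multiplicative.toAdd μ).1 (basePoint O) :=
  rfl

theorem restrictToStab_eq_one_iff (δ : Coc s t k j') :
    restrictToStab s t k j' δ = 1 ↔
      ∀ O, ∀ μ ∈ stabOrbit s t k j' O, δ.1 μ (basePoint O) = 1 := by
  simp only [funext_iff, MonoidHom.ext_iff, restrictToStab_apply, Pi.one_apply,
    MonoidHom.one_apply, Multiplicative.forall, toAdd_ofAdd, Subtype.forall]

variable (s t k j') in
open Classical in
noncomputable def potential (δ : (E → ZMod 2) → (E → ℚ) → ℂˣ) (x : E → ℚ) :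
    ℂˣ :=
  if hx : Reachable s t k j' x then δ hx.path (basePoint hx.orbit) else 1

theorem potential_actW_basePoint {δ : (E → ZMod 2) → (E → ℚ) → ℂˣ}
    (hδ : IsCocycle s t k j' δ)
    (htriv : ∀ O, ∀ μ ∈ stabOrbit s t k j' O, δ μ (basePoint O) = 1)
    {O : Quotient (orbitSetoid s t k j')} {l : E → ZMod 2} (hl : l ∈ cycleSpace s t) :
    potential s t k j' δ (actW k l (basePoint O)) = δ l (basePoint O) := by
  have hx : Reachable s t k j' (actW k l (basePoint O)) := ⟨O, l, hl, rfl⟩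
  have hO := hx.orbit_eq hl rfl
  have hμ : hx.path + l ∈ stab s t k (basePoint O) := by
    refine ⟨add_mem hx.path_mem hl, ?_⟩
    rw [actW_add, hx.actW_path_self, hO]
  have hμ_triv : δ (hx.path + l) (basePoint O) = 1 :=
    htriv O _ (by rwa [stabOrbit_eq_stab_basePoint])
  rw [potential, dif_pos hx, hO]
  calc δ hx.path (basePoint O) = δ (l + (hx.path + l)) (basePoint O) := by
        rw [add_left_comm, add_self_zmod2, add_zero]
    _ = δ l (basePoint O) := by
        rw [IsCocycle.apply_add_of_mem_stab hδ (basePoint_mem O) hl hμ, hμ_triv, mul_one]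

theorem isCoboundary_of_apply_stabOrbit_eq_one {δ : (E → ZMod 2) → (E → ℚ) → ℂˣ}
    (hδ : IsCocycle s t k j' δ)
    (htriv : ∀ O, ∀ μ ∈ stabOrbit s t k j' O, δ μ (basePoint O) = 1) :
    IsCoboundary s t k j' δ := by
  refine ⟨potential s t k j' δ, fun l hl j hj => ?_⟩
  obtain ⟨O, p, hp, rfl⟩ := reachable_of_mem hj
  rw [← actW_add, potential_actW_basePoint hδ htriv (add_mem hl hp),
    potential_actW_basePoint hδ htriv hp, hδ l hl p hp _ (basePoint_mem _), mul_inv_cancel_right]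

theorem ker_restrictToStab : (restrictToStab s t k j').ker = Cob s t k j' := by
  ext δ
  rw [MonoidHom.mem_ker, restrictToStab_eq_one_iff]
  exact ⟨isCoboundary_of_apply_stabOrbit_eq_one δ.2, fun h O μ hμ =>
    IsCoboundary.apply_of_mem_stab h (basePoint_mem O) (mem_stab_basePoint hμ)⟩

variable (s t k j') in
open Classical in
noncomputable def cocycleOfCharacters
    (χ : ∀ O : Quotient (orbitSetoid s t k j'),
      Multiplicative (stabOrbit s t k j' O) →* ℂˣ)
    (l : E → ZMod 2) (x : E → ℚ) : ℂˣ :=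
  if h : Reachable s t k j' x ∧ Reachable s t k j' (actW k l x) then
    extendByOne (χ h.1.orbit) (h.2.path + l + h.1.path)
  else 1

theorem cocycleOfCharacters_apply
    (χ : ∀ O : Quotient (orbitSetoid s t k j'),
      Multiplicative (stabOrbit s t k j' O) →* ℂˣ)
    {x : E → ℚ} {l : E → ZMod 2} (hx : Reachable s t k j' x) (hl : l ∈ cycleSpace s t) :
    cocycleOfCharacters s t k j' χ l x =
      extendByOne (χ hx.orbit) ((hx.actW hl).path + l + hx.path) :=
  dif_pos ⟨hx, hx.actW hl⟩

theorem isCocycle_cocycleOfCharacters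
    (χ : ∀ O : Quotient (orbitSetoid s t k j'),
      Multiplicative (stabOrbit s t k j' O) →* ℂˣ) :
    IsCocycle s t k j' (cocycleOfCharacters s t k j' χ) := by
  intro l hl l' hl' x hx
  have hx := reachable_of_mem hx
  have hx' := hx.actW hl'
  have hpath : (hx.actW (add_mem hl hl')).path = (hx'.actW hl).path :=
    Reachable.path_congr _ _ (actW_add k l l' x)
  rw [cocycleOfCharacters_apply χ hx (add_mem hl hl'), cocycleOfCharacters_apply χ hx' hl,
    cocycleOfCharacters_apply χ hx hl', hx.orbit_actW hl', hpath]
  have h₁ := hx'.path_add_add_path_mem hl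
  rw [hx.orbit_actW hl'] at h₁
  rw [← extendByOne_add _ h₁ (hx.path_add_add_path_mem hl')]
  congr 1
  calc (hx'.actW hl).path + (l + l') + hx.path
      = (hx'.actW hl).path + (l + l') + hx.path + (hx'.path + hx'.path) := by
        rw [add_self_zmod2, add_zero]
    _ = _ := by abel

theorem restrictToStab_surjective : Function.Surjective (restrictToStab s t k j') := by
  intro χ
  refine ⟨⟨cocycleOfCharacters s t k j' χ, isCocycle_cocycleOfCharacters χ⟩, ?_⟩
  funext O
  refine MonoidHom.ext fun μ => ?_
  obtain ⟨hμ, hμb⟩ := mem_stab_basePoint (Multiplicative.toAdd μ).2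
  have hb : Reachable s t k j' (basePoint O) := ⟨O, 0, zero_mem _, actW_zero k _⟩
  have hpath : (hb.actW hμ).path = hb.path := Reachable.path_congr _ _ hμb
  change cocycleOfCharacters s t k j' χ (Multiplicative.toAdd μ).1 (basePoint O) = χ O μ
  rw [cocycleOfCharacters_apply χ hb hμ, hpath,
    hb.orbit_eq (zero_mem _) (actW_zero k _), add_comm, ← add_assoc, add_self_zmod2, zero_add,
    extendByOne_of_mem _ (Multiplicative.toAdd μ).2]
  rfl

end FirstCohomology

open FirstCohomology in
theorem first_cohomology_structure_general
    (s t : E → V) (k : ℕ) (j' : E → ℚ) :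
    Nonempty ((↥(Coc s t k j') ⧸ Cob s t k j') ≃*
      ∀ O : Quotient (orbitSetoid s t k j'),
        Multiplicative ↥(stabOrbit s t k j' O) →* ℂˣ) :=
  ⟨(QuotientGroup.quotientMulEquivOfEq ker_restrictToStab.symm).trans
    (QuotientGroup.quotientKerEquivOfSurjective _ restrictToStab_surjective)⟩

/-- the quotient of the abelian group of twisted 1-cocycles by the subgroup
of coboundaries is isomorphic, as an abelian group, to the product over all orbits `O` of
the action of `Z(Γ)` on `QCG_k(Γ; j')` of the character groups `Hom(Stab(O), ℂˣ)`. -/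
theorem first_cohomology_structure
    (s t : E → V) (k : ℕ) (j' : E → ℚ)
    (hut : Unitrivalent s t) (hk : 0 < k) :
    Nonempty ((↥(Coc s t k j') ⧸ Cob s t k j') ≃*
      ∀ O : Quotient (orbitSetoid s t k j'),
        Multiplicative ↥(stabOrbit s t k j' O) →* ℂˣ) :=
  first_cohomology_structure_general s t k j'
end

section
/- Assume Γ is unitrivalent. If j ∈ QCG_k(Γ; j') and λ ∈ Z(Γ), then λ·j ∈ QCG_k(Γ; j'); that is, the action of the cycle space on weights preserves admissibility of level k and the prescribed boundary values. -/
open scoped BigOperators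

set_option linter.unusedSectionVars false
set_option linter.unreachableTactic false
set_option linter.unusedTactic false

variable {V E : Type*} [Fintype V] [Fintype E] [DecidableEq V] [DecidableEq E]

/-- the action of the cycle space on weights preserves admissibility of
level `k` and the prescribed boundary values. -/
theorem actW_mem_QCG (s t : E → V) (k : ℕ) (j' : E → ℚ)
    (hut : Unitrivalent s t) (hk : 0 < k)
    (j : E → ℚ) (hj : j ∈ QCG s t k j')
    (lam : E → ZMod 2) (hlam : lam ∈ cycleSpace s t) :
    actW k lam j ∈ QCG s t k j' := by
  obtain ⟨hw, hbd, htv⟩ := hj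
  have hcyc : ∀ v, ((endsAt s t v).map lam).sum = 0 := hlam
  have hhalf : ∀ f, ∃ n : ℤ, 2 * j f = n := by
    intro f
    obtain ⟨m, _, hm⟩ := hw f
    exact ⟨m, by rw [hm]; push_cast; ring⟩
  have h01 : ∀ x : ZMod 2, x = 0 ∨ x = 1 := by decide
  have hlam0 : ∀ f, (degree s t (s f) = 1 ∨ degree s t (t f) = 1) → lam f = 0 := by
    intro f hf
    rcases hf with h | h
    · obtain ⟨e, he⟩ := Multiset.card_eq_one.mp h
      have hfin : f ∈ endsAt s t (s f) := by
        unfold endsAt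
        exact Multiset.mem_add.mpr (Or.inl (by simp))
      rw [he] at hfin
      have hfe : f = e := by simpa using hfin
      have hc := hcyc (s f)
      rw [he, ← hfe] at hc
      simpa using hc
    · obtain ⟨e, he⟩ := Multiset.card_eq_one.mp h
      have hfin : f ∈ endsAt s t (t f) := by
        unfold endsAt
        exact Multiset.mem_add.mpr (Or.inr (by simp))
      rw [he] at hfin
      have hfe : f = e := by simpa using hfin
      have hc := hcyc (t f)
      rw [he, ← hfe] at hc
      simpa using hc
  refine ⟨?_, ?_, ?_⟩
  · intro f
    obtain ⟨m, hm, hjm⟩ := hw f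
    by_cases hf : lam f = 1
    · refine ⟨k - m, by omega, ?_⟩
      simp only [actW, hf, if_pos]
      rw [hjm, Nat.cast_sub hm]
      ring
    · exact ⟨m, hm, by simpa [actW, hf] using hjm⟩
  · intro f hf
    have h0 := hlam0 f hf
    have : actW k lam j f = j f := by simp [actW, h0]
    rw [this]
    exact hbd f hf
  · intro v hv
    obtain ⟨a, b, c, habc⟩ := Multiset.card_eq_three.mp hv
    obtain ⟨⟨m, hm⟩, htri, hbound⟩ := htv v hv
    have hcv0 := hcyc v
    rw [habc] at hm htri hbound hcv0 ⊢
    simp only [Multiset.insert_eq_cons, Multiset.map_cons, Multiset.sum_cons,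
      Multiset.map_singleton, Multiset.sum_singleton, Multiset.mem_cons,
      Multiset.mem_singleton] at hm htri hbound ⊢
    have hcv : lam a + (lam b + lam c) = 0 := by simpa using hcv0
    have hA : 2 * j a ≤ j a + (j b + j c) := htri (j a) (by tauto)
    have hB : 2 * j b ≤ j a + (j b + j c) := htri (j b) (by tauto)
    have hC : 2 * j c ≤ j a + (j b + j c) := htri (j c) (by tauto)
    obtain ⟨na, hna⟩ := hhalf a
    obtain ⟨nb, hnb⟩ := hhalf b
    obtain ⟨nc, hnc⟩ := hhalf c
    rcases h01 (lam a) with ha | ha <;> rcases h01 (lam b) with hb | hb <;>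
      rcases h01 (lam c) with hc | hc
    · simp only [actW, ha, hb, hc, if_neg (show (0:ZMod 2) ≠ 1 by decide)]
      refine ⟨⟨m, hm⟩, ?_, hbound⟩
      intro x hx
      rcases hx with h | h | h <;> subst h <;> linarith
    · rw [ha, hb, hc] at hcv; exact absurd hcv (by decide)
    · rw [ha, hb, hc] at hcv; exact absurd hcv (by decide)
    · simp only [actW, ha, hb, hc, if_pos, if_neg (show (0:ZMod 2) ≠ 1 by decide)]
      refine ⟨⟨na - m + k, by push_cast; linarith⟩, ?_, by linarith⟩
      intro x hx
      rcases hx with h | h | h <;> subst h <;> push_cast <;> linarith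
    · rw [ha, hb, hc] at hcv; exact absurd hcv (by decide)
    · simp only [actW, ha, hb, hc, if_pos, if_neg (show (0:ZMod 2) ≠ 1 by decide)]
      refine ⟨⟨nb - m + k, by push_cast; linarith⟩, ?_, by linarith⟩
      intro x hx
      rcases hx with h | h | h <;> subst h <;> push_cast <;> linarith
    · simp only [actW, ha, hb, hc, if_pos, if_neg (show (0:ZMod 2) ≠ 1 by decide)]
      refine ⟨⟨nc - m + k, by push_cast; linarith⟩, ?_, by linarith⟩
      intro x hx
      rcases hx with h | h | h <;> subst h <;> push_cast <;> linarith
    · rw [ha, hb, hc] at hcv; exact absurd hcv (by decide)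
end

section
/- Assume Γ is unitrivalent, j ∈ QCG_k(Γ; j'), λ ∈ Z(Γ), λ ≠ 0, and λ·j = j. Then k is even, j f = k/4 for every edge f with λ f = 1, and j f is an integer for every λ-external edge f. -/
open scoped BigOperators

set_option linter.unusedSectionVars false
set_option linter.unreachableTactic false
set_option linter.unusedTactic false

variable {V E : Type*} [Fintype V] [Fintype E] [DecidableEq V] [DecidableEq E]

/-- if `j ∈ QCG_k(Γ; j')`, `lam ∈ Z(Γ)`, `lam ≠ 0` and `lam · j = j`, then
`k` is even, `j f = k/4` on every edge of `lam`, and `j f` is an integer for every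
`lam`-external edge `f`. -/
theorem fixed_weight_structure
    (s t : E → V) (k : ℕ) (j' : E → ℚ)
    (hut : Unitrivalent s t) (hk : 0 < k)
    (j : E → ℚ) (hj : j ∈ QCG s t k j')
    (lam : E → ZMod 2) (hlam : lam ∈ cycleSpace s t)
    (hne : lam ≠ 0) (hfix : actW k lam j = j) :
    Even k ∧ (∀ f, lam f = 1 → j f = (k : ℚ) / 4) ∧
      (∀ f, IsExternal s t lam f → ∃ m : ℤ, j f = (m : ℚ)) := by
  have h01 : ∀ x : ZMod 2, x = 0 ∨ x = 1 := by decide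
  -- part 2: edges of lam have weight k/4
  have key : ∀ f, lam f = 1 → j f = (k : ℚ) / 4 := by
    intro f hf
    have h := congrFun hfix f
    simp only [actW, hf, if_true] at h
    linarith
  -- part 1: k is even
  have hkeven : Even k := by
    have hex : ∃ f, lam f ≠ 0 := by
      by_contra h
      push_neg at h
      exact hne (funext fun f => h f)
    obtain ⟨f, hf⟩ := hex
    have hf1 : lam f = 1 := by rcases h01 (lam f) with h | h; exact absurd h hf; exact h
    obtain ⟨m, _, hm⟩ := hj.1 f
    have h4 : j f = (k : ℚ) / 4 := key f hf1
    have : (k : ℚ) = ((2 * m : ℕ) : ℚ) := by push_cast; rw [hm] at h4; linarith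
    have hk2 : k = 2 * m := Nat.cast_injective this
    exact ⟨m, by omega⟩
  obtain ⟨n, hn⟩ := id hkeven
  refine ⟨hkeven, key, ?_⟩
  intro f hf
  obtain ⟨hf0, hxor⟩ := hf
  have mem_ends : ∀ (g : E) (w : V), g ∈ endsAt s t w ↔ (s g = w ∨ t g = w) := by
    intro g w
    simp [endsAt]
  obtain ⟨v, hv, hfv⟩ : ∃ v, LiesOn s t lam v ∧ (s f = v ∨ t f = v) := by
    rcases hxor with ⟨h1, _⟩ | ⟨h1, _⟩
    exacts [⟨s f, h1, Or.inl rfl⟩, ⟨t f, h1, Or.inr rfl⟩]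
  obtain ⟨e, he1, hev⟩ := hv
  have hef : e ≠ f := by
    intro h; rw [h, hf0] at he1; exact absurd he1 (by decide)
  have hfM : f ∈ endsAt s t v := (mem_ends f v).mpr hfv
  have heM : e ∈ endsAt s t v := (mem_ends e v).mpr hev
  have hdeg : degree s t v = 3 := by
    rcases hut v with h | h
    · exfalso
      obtain ⟨x, hx⟩ := Multiset.card_eq_one.mp h
      rw [hx] at hfM heM
      simp at hfM heM
      exact hef (heM.trans hfM.symm)
    · exact h
  have hM : endsAt s t v = f ::ₘ (endsAt s t v).erase f := (Multiset.cons_erase hfM).symm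
  have hcard2 : Multiset.card ((endsAt s t v).erase f) = 2 := by
    rw [Multiset.card_erase_of_mem hfM]
    have h3 : Multiset.card (endsAt s t v) = 3 := hdeg
    rw [h3]; rfl
  obtain ⟨a, b, hab⟩ := Multiset.card_eq_two.mp hcard2
  have heab : e = a ∨ e = b := by
    have hee : e ∈ (endsAt s t v).erase f := (Multiset.mem_erase_of_ne hef).mpr heM
    rw [hab] at hee
    simpa using hee
  have hsum := hlam v
  rw [hM, hab] at hsum
  simp only [Multiset.map_cons, Multiset.sum_cons, Multiset.insert_eq_cons,
    Multiset.map_singleton, Multiset.sum_singleton, hf0, zero_add] at hsum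
  have hab1 : lam a = 1 ∧ lam b = 1 := by
    rcases h01 (lam a) with ha | ha <;> rcases h01 (lam b) with hb | hb
    · exfalso
      rcases heab with h | h <;> rw [h] at he1
      · rw [he1] at ha; exact absurd ha (by decide)
      · rw [he1] at hb; exact absurd hb (by decide)
    · rw [ha, hb] at hsum; exact absurd hsum (by decide)
    · rw [ha, hb] at hsum; exact absurd hsum (by decide)
    · exact ⟨ha, hb⟩
  have hja : j a = (k : ℚ) / 4 := key a hab1.1
  have hjb : j b = (k : ℚ) / 4 := key b hab1.2
  obtain ⟨m, hm⟩ := ((hj.2.2 v hdeg).1)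
  rw [hM, hab] at hm
  simp only [Multiset.map_cons, Multiset.sum_cons, Multiset.insert_eq_cons,
    Multiset.map_singleton, Multiset.sum_singleton] at hm
  refine ⟨m - n, ?_⟩
  have hkn : (k : ℚ) = 2 * (n : ℚ) := by rw [hn]; push_cast; ring
  push_cast
  rw [hja, hjb] at hm
  linarith
end

section
/- Assume Γ is unitrivalent, j ∈ QCG_k(Γ; j'), λ, λ' ∈ Z(Γ), and λ·j = j. Then Σ_{f ∈ Ex(λ)} ((λ'·j) f − j f) ∈ 2ℤ; in particular Σ_{f ∈ Ex(λ)} (λ'·j) f and Σ_{f ∈ Ex(λ)} j f are congruent modulo 2. -/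
open scoped BigOperators

set_option linter.unusedSectionVars false
set_option linter.unreachableTactic false
set_option linter.unusedTactic false

variable {V E : Type*} [Fintype V] [Fintype E] [DecidableEq V] [DecidableEq E]

set_option maxHeartbeats 1000000 in
set_option synthInstance.maxSize 2000 in
/-- Local trivalent-vertex identity in `ZMod 2`. -/
lemma zmod2_loc : ∀ (K μa μb μc νa νb νc ma mb mc : ZMod 2),
    μa + μb + μc = 0 → νa + νb + νc = 0 → ma + mb + mc = 0 →
    (μa = 1 ∨ μb = 1 ∨ μc = 1) →
    (μa = 1 → ma = K) → (μb = 1 → mb = K) → (μc = 1 → mc = K) →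
    νa * (K + ma) + νb * (K + mb) + νc * (K + mc)
      = K * (νa * μa + νb * μb + νc * μc) := by decide

lemma sum_ends_filter (s t : E → V) (p : V → Prop) [DecidablePred p] (g : E → ZMod 2) :
    ∑ v ∈ Finset.univ.filter p, ((endsAt s t v).map g).sum
      = ∑ e : E, ((if p (s e) then g e else 0) + (if p (t e) then g e else 0)) := by
  have h1 : ∀ v, ((endsAt s t v).map g).sum
      = (∑ e ∈ Finset.univ.filter (fun e => s e = v), g e)
        + (∑ e ∈ Finset.univ.filter (fun e => t e = v), g e) := by
    intro v
    simp [endsAt, Finset.sum]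
  simp only [h1, Finset.sum_add_distrib]
  rw [Finset.sum_fiberwise_eq_sum_filter Finset.univ (Finset.univ.filter p) s g,
      Finset.sum_fiberwise_eq_sum_filter Finset.univ (Finset.univ.filter p) t g,
      Finset.sum_filter, Finset.sum_filter]
  simp [Finset.mem_filter, Finset.sum_add_distrib]

lemma Ex_eq (s t : E → V) (lam : E → ZMod 2) [DecidablePred (IsExternal s t lam)] :
    Ex s t lam = Finset.univ.filter (IsExternal s t lam) := by
  ext f; simp [Ex]

lemma sum_over_Ex (s t : E → V) (lam : E → ZMod 2)
    [DecidablePred (LiesOn s t lam)] [DecidablePred (IsExternal s t lam)]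
    (g : E → ZMod 2) :
    ∑ v ∈ Finset.univ.filter (LiesOn s t lam), ((endsAt s t v).map g).sum
      = ∑ f ∈ Ex s t lam, g f := by
  rw [sum_ends_filter, Ex_eq, Finset.sum_filter]
  apply Finset.sum_congr rfl
  intro e _
  have h01 : ∀ x : ZMod 2, x = 0 ∨ x = 1 := by decide
  have hs1 : lam e = 1 → LiesOn s t lam (s e) := fun h => ⟨e, h, Or.inl rfl⟩
  have ht1 : lam e = 1 → LiesOn s t lam (t e) := fun h => ⟨e, h, Or.inr rfl⟩
  by_cases hs : LiesOn s t lam (s e) <;> by_cases ht : LiesOn s t lam (t e)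
  · have : ¬ IsExternal s t lam e := fun ⟨_, hx⟩ => hx.elim (fun h => h.2 ht) (fun h => h.2 hs)
    simp only [if_pos hs, if_pos ht, if_neg this]
    have : ∀ x : ZMod 2, x + x = 0 := by decide
    exact this _
  · rcases h01 (lam e) with h | h
    · have : IsExternal s t lam e := ⟨h, Or.inl ⟨hs, ht⟩⟩
      simp [hs, ht, this]
    · exact absurd (ht1 h) ht
  · rcases h01 (lam e) with h | h
    · have : IsExternal s t lam e := ⟨h, Or.inr ⟨ht, hs⟩⟩
      simp [hs, ht, this]
    · exact absurd (hs1 h) hs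
  · have : ¬ IsExternal s t lam e := fun ⟨_, hx⟩ => hx.elim (fun h => hs h.1) (fun h => ht h.1)
    simp [hs, ht, this]

/-- if `lam · j = j` then `Σ_{f ∈ Ex(lam)} ((lam' · j) f − j f) ∈ 2ℤ`;
in particular `Σ_{f ∈ Ex(lam)} (lam' · j) f` and `Σ_{f ∈ Ex(lam)} j f` are congruent
modulo `2`. -/
theorem external_sum_act_sub_self_even
    (s t : E → V) (k : ℕ) (j' : E → ℚ)
    (hut : Unitrivalent s t) (hk : 0 < k)
    (j : E → ℚ) (hj : j ∈ QCG s t k j')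
    (lam : E → ZMod 2) (hlam : lam ∈ cycleSpace s t)
    (lam' : E → ZMod 2) (hlam' : lam' ∈ cycleSpace s t)
    (hfix : actW k lam j = j) :
    ∃ m : ℤ, (∑ f ∈ Ex s t lam, (actW k lam' j f - j f)) = 2 * (m : ℚ) := by
  classical
  obtain ⟨hw, hbd, htri⟩ := hj
  choose m hmk hm using hw
  have h01 : ∀ x : ZMod 2, x = 0 ∨ x = 1 := by decide
  have hcyc : ∀ v, ((endsAt s t v).map lam).sum = 0 := hlam
  have hcyc' : ∀ v, ((endsAt s t v).map lam').sum = 0 := hlam'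
  by_cases hlz : ∀ e, lam e ≠ 1
  · have hEx : Ex s t lam = ∅ := by
      rw [Ex_eq, Finset.filter_eq_empty_iff]
      rintro e - ⟨h0, hx⟩
      rcases hx with ⟨⟨e', he', -⟩, -⟩ | ⟨⟨e', he', -⟩, -⟩ <;> exact hlz e' he'
    exact ⟨0, by simp [hEx]⟩
  push_neg at hlz
  obtain ⟨e0, he0⟩ := hlz
  have hfix' : ∀ e, lam e = 1 → (m e : ℚ) * 2 = (k : ℚ) := by
    intro e he
    have h := congrFun hfix e
    simp only [actW, if_pos he] at h
    rw [hm e] at h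
    linarith
  set K := m e0 with hK
  have hk2 : k = 2 * K := by
    have h := hfix' e0 he0
    exact_mod_cast (by push_cast; linarith : ((2 * K : ℕ) : ℚ) = (k : ℚ)).symm
  have hmK : ∀ e, lam e = 1 → m e = K := by
    intro e he
    have h := hfix' e he
    rw [hk2] at h
    exact_mod_cast (by push_cast at h ⊢; linarith : ((m e : ℕ) : ℚ) = ((K : ℕ) : ℚ))
  set ε : E → ZMod 2 := fun e => (K : ZMod 2) + (m e : ZMod 2) with hε
  have hmemEnds : ∀ v e, (s e = v ∨ t e = v) → e ∈ endsAt s t v := by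
    intro v e hev
    rcases hev with h | h
    · exact Multiset.mem_add.mpr (Or.inl (by simp [h]))
    · exact Multiset.mem_add.mpr (Or.inr (by simp [h]))
  have hdeg : ∀ v, LiesOn s t lam v → degree s t v = 3 := by
    intro v hv
    rcases hut v with h1 | h3
    · exfalso
      obtain ⟨e, he, hev⟩ := hv
      have hmem : e ∈ endsAt s t v := hmemEnds v e hev
      obtain ⟨x, hx⟩ := Multiset.card_eq_one.mp h1
      have hsum := hcyc v
      rw [hx] at hsum hmem
      simp at hsum hmem
      rw [hmem] at he
      rw [he] at hsum
      exact one_ne_zero hsum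
    · exact h3
  have key : ∑ f ∈ Ex s t lam, (lam' f * ε f) = 0 := by
    rw [← sum_over_Ex s t lam]
    have hloc : ∀ v ∈ Finset.univ.filter (LiesOn s t lam),
        ((endsAt s t v).map (fun e => lam' e * ε e)).sum
          = (K : ZMod 2) * ((endsAt s t v).map (fun e => lam' e * lam e)).sum := by
      intro v hv
      rw [Finset.mem_filter] at hv
      replace hv := hv.2
      have hd3 := hdeg v hv
      obtain ⟨a, b, c, habc⟩ := Multiset.card_eq_three.mp hd3
      have hμ : lam a + lam b + lam c = 0 := by
        have h := hcyc v; rw [habc] at h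
        simpa [add_assoc] using h
      have hν : lam' a + lam' b + lam' c = 0 := by
        have h := hcyc' v; rw [habc] at h
        simpa [add_assoc] using h
      have hm2 : (m a : ZMod 2) + (m b : ZMod 2) + (m c : ZMod 2) = 0 := by
        obtain ⟨z, hz⟩ := (htri v hd3).1
        rw [habc] at hz
        simp only [Multiset.insert_eq_cons, Multiset.map_cons, Multiset.map_singleton,
          Multiset.sum_cons, Multiset.sum_singleton, hm] at hz
        have hint : ((m a + m b + m c : ℕ) : ℤ) = 2 * z := by
          exact_mod_cast (by push_cast; linarith : ((m a + m b + m c : ℕ) : ℚ) = ((2 * z : ℤ) : ℚ))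
        calc (m a : ZMod 2) + m b + m c = (((m a + m b + m c : ℕ) : ℤ) : ZMod 2) := by
              push_cast; ring
          _ = ((2 * z : ℤ) : ZMod 2) := by rw [hint]
          _ = 0 := by
              push_cast
              rw [show (2 : ZMod 2) = 0 by decide]
              ring
      have hone : lam a = 1 ∨ lam b = 1 ∨ lam c = 1 := by
        obtain ⟨e, he, hev⟩ := hv
        have hmem : e ∈ endsAt s t v := hmemEnds v e hev
        rw [habc] at hmem
        simp only [Multiset.insert_eq_cons, Multiset.mem_cons, Multiset.mem_singleton] at hmem
        rcases hmem with rfl | rfl | rfl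
        · exact Or.inl he
        · exact Or.inr (Or.inl he)
        · exact Or.inr (Or.inr he)
      have hKa : lam a = 1 → (m a : ZMod 2) = (K : ZMod 2) := fun h => by rw [hmK a h]
      have hKb : lam b = 1 → (m b : ZMod 2) = (K : ZMod 2) := fun h => by rw [hmK b h]
      have hKc : lam c = 1 → (m c : ZMod 2) = (K : ZMod 2) := fun h => by rw [hmK c h]
      have hz2 := zmod2_loc (K : ZMod 2) (lam a) (lam b) (lam c) (lam' a) (lam' b) (lam' c)
        (m a) (m b) (m c) hμ hν hm2 hone hKa hKb hKc
      rw [habc]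
      simp only [Multiset.insert_eq_cons, Multiset.map_cons, Multiset.map_singleton,
        Multiset.sum_cons, Multiset.sum_singleton, hε]
      rw [← add_assoc, hz2, ← add_assoc]
    rw [Finset.sum_congr rfl hloc, ← Finset.mul_sum, sum_over_Ex s t lam]
    have hz : ∑ f ∈ Ex s t lam, lam' f * lam f = 0 := by
      apply Finset.sum_eq_zero
      intro f hf
      rw [Ex_eq, Finset.mem_filter] at hf
      rw [hf.2.1, mul_zero]
    rw [hz, mul_zero]
  have hterm : ∀ f, actW k lam' j f - j f
      = (((if lam' f = 1 then (K : ℤ) - m f else 0) : ℤ) : ℚ) := by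
    intro f
    by_cases h : lam' f = 1
    · simp only [actW, if_pos h, hm f, hk2]
      push_cast
      ring
    · simp [actW, h]
  rw [Finset.sum_congr rfl (fun f _ => hterm f), ← Int.cast_sum]
  have hcast : (((∑ f ∈ Ex s t lam, (if lam' f = 1 then (K : ℤ) - m f else 0)) : ℤ) : ZMod 2)
      = 0 := by
    rw [Int.cast_sum]
    rw [← key]
    apply Finset.sum_congr rfl
    intro f _
    rcases h01 (lam' f) with h | h
    · rw [h, zero_mul, if_neg (by decide : ¬(0 : ZMod 2) = 1)]
      simp
    · rw [h, one_mul, if_pos rfl]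
      simp only [hε]
      push_cast
      rw [show ∀ x y : ZMod 2, x - y = x + y by decide]
  have hdvd : (2 : ℤ) ∣ ∑ f ∈ Ex s t lam, (if lam' f = 1 then (K : ℤ) - m f else 0) := by
    exact_mod_cast (ZMod.intCast_zmod_eq_zero_iff_dvd _ 2).mp hcast
  obtain ⟨w, hw2⟩ := hdvd
  refine ⟨w, ?_⟩
  rw [hw2]
  push_cast
  ring
end

section
/- Assume Γ is unitrivalent, j ∈ QCG_k(Γ; j'), λ₁, λ₂ ∈ Z(Γ), λ₁·j = j and λ₂·j = j. Then Σ_{f ∈ Ex(λ₁ + λ₂)} j f − Σ_{f ∈ Ex(λ₁)} j f − Σ_{f ∈ Ex(λ₂)} j f ∈ 2ℤ. -/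
open scoped BigOperators

set_option linter.unusedSectionVars false
set_option linter.unreachableTactic false
set_option linter.unusedTactic false

variable {V E : Type*} [Fintype V] [Fintype E] [DecidableEq V] [DecidableEq E]

/-!
For a cycle `λ` fixed by `j`, every edge of `λ` has weight `k/4`, and by unitrivalence every
vertex `v` on `λ` is trivalent with exactly two `λ`-ends. So the third end at `v` has weight
`excess v = S_v - k/2`, where `S_v` is the weight sum at `v`, and this is an integer. Summing
over the vertices on `λ` counts each external edge once and each chord twice, and chords have
integer weight, hence `Σ_{Ex(λ)} j ≡ Σ_{v on λ} excess v (mod 2)`.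

The three vertex sums for `λ₁ + λ₂`, `λ₁`, `λ₂` combine to `-Σ_v c_v · excess v`, where `c_v`
counts the ends at `v` shared by `λ₁` and `λ₂`. Where `c_v = 2` the term is even. Where
`c_v = 1` all three ends lie on `λ₁` or `λ₂`, so the term is `k/4`, an integer since `excess v`
is; by the handshake lemma there is an even number of such vertices.
-/

open Finset
open scoped Classical

namespace Multiset

variable {α M : Type*} [AddCommMonoid M] (s : Multiset α)

theorem sum_map_ite_eq_countP_nsmul (p : α → Prop) [DecidablePred p] (c : M) :
    (s.map fun a => if p a then c else 0).sum = s.countP p • c := by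
  induction s using Multiset.induction_on with
  | empty => simp
  | cons a s ih => by_cases h : p a <;> simp [h, ih, add_nsmul, add_comm]

theorem sum_map_ite_eq_of_countP_eq_one {p : α → Prop} [DecidablePred p] {a : α} (ha : a ∈ s)
    (hpa : p a) (hcount : s.countP p = 1) (f : α → M) :
    (s.map fun x => if p x then f x else 0).sum = f a := by
  obtain ⟨s, rfl⟩ := exists_cons_of_mem ha
  have hs : ∀ x ∈ s, ¬ p x := countP_eq_zero.1 (by simpa [countP_cons, hpa] using hcount)
  simp [hpa, map_congr rfl fun x hx => if_neg (hs x hx)]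

theorem countP_or_add_countP_and (p q : α → Prop) [DecidablePred p] [DecidablePred q] :
    s.countP (fun a => p a ∨ q a) + s.countP (fun a => p a ∧ q a) =
      s.countP p + s.countP q := by
  induction s using Multiset.induction_on with
  | empty => simp
  | cons a s ih => simp only [countP_cons]; split_ifs <;> simp_all <;> omega

theorem sum_map_eq_countP_eq_one (x : α → ZMod 2) : (s.map x).sum = s.countP (x · = 1) := by
  have hx : ∀ a, x a = if x a = 1 then 1 else 0 := fun a => by
    generalize x a = z; revert z; decide
  rw [map_congr rfl fun a _ => hx a, sum_map_ite_eq_countP_nsmul, nsmul_one]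

theorem countP_add_eq_one_add_two_mul (x y : α → ZMod 2) :
    s.countP (fun a => (x + y) a = 1) + 2 * s.countP (fun a => x a = 1 ∧ y a = 1) =
      s.countP (x · = 1) + s.countP (y · = 1) := by
  induction s using Multiset.induction_on with
  | empty => simp
  | cons a s ih =>
    have key : ∀ u w : ZMod 2, (if u + w = 1 then 1 else 0) + 2 * (if u = 1 ∧ w = 1 then 1 else 0)
        = (if u = 1 then 1 else 0) + (if w = 1 then 1 else 0) := by decide
    have := key (x a) (y a)
    simp only [countP_cons, Pi.add_apply] at ih ⊢
    omega

end Multiset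

theorem AddCommGroup.ModEq.sum {ι M : Type*} [AddCommMonoid M] {p : M} {u : Finset ι}
    {f g : ι → M} (h : ∀ i ∈ u, f i ≡ g i [PMOD p]) : ∑ i ∈ u, f i ≡ ∑ i ∈ u, g i [PMOD p] := by
  induction u using Finset.cons_induction with
  | empty => simp
  | cons i u hi ih =>
    simp only [sum_cons]
    exact (h i (mem_cons_self i u)).add (ih fun x hx => h x (mem_cons_of_mem hx))

section Graph

variable {s t : E → V}

theorem mem_endsAt {v : V} {e : E} : e ∈ endsAt s t v ↔ s e = v ∨ t e = v := by
  simp [endsAt]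

theorem sum_sum_endsAt {M : Type*} [AddCommMonoid M] (g : V → E → M) :
    ∑ v, ((endsAt s t v).map (g v)).sum = ∑ e, (g (s e) e + g (t e) e) := by
  have fiber (u : E → V) : ∑ v, ∑ e ∈ univ.filter (u · = v), g v e = ∑ e, g (u e) e := by
    rw [← sum_fiberwise univ u fun e => g (u e) e]
    exact sum_congr rfl fun v _ => sum_congr rfl fun e he => by rw [(mem_filter.1 he).2]
  simp only [endsAt, Multiset.map_add, Multiset.sum_add, sum_add_distrib, ← fiber s, ← fiber t]
  rfl

theorem sum_countP_endsAt (p : E → Prop) [DecidablePred p] :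
    ∑ v, (endsAt s t v).countP p = 2 * #(univ.filter p) := by
  have h (v : V) :
      (endsAt s t v).countP p = ((endsAt s t v).map fun e => if p e then 1 else 0).sum := by
    rw [Multiset.sum_map_ite_eq_countP_nsmul, smul_eq_mul, mul_one]
  simp only [h, sum_sum_endsAt, card_filter, ← two_mul, mul_sum]

theorem isExternal_iff {lam : E → ZMod 2} {f : E} :
    IsExternal s t lam f ↔ lam f = 0 ∧
      (LiesOn s t lam (s f) ∧ ¬ LiesOn s t lam (t f) ∨
        LiesOn s t lam (t f) ∧ ¬ LiesOn s t lam (s f)) :=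
  Iff.rfl

theorem liesOn_iff_countP_pos {lam : E → ZMod 2} {v : V} :
    LiesOn s t lam v ↔ 0 < (endsAt s t v).countP (lam · = 1) := by
  simp only [Multiset.countP_pos, mem_endsAt, LiesOn]
  exact exists_congr fun e => and_comm

theorem even_countP_endsAt {lam : E → ZMod 2} (hlam : lam ∈ cycleSpace s t) (v : V) :
    Even ((endsAt s t v).countP (lam · = 1)) := by
  rw [← ZMod.natCast_eq_zero_iff_even, ← Multiset.sum_map_eq_countP_eq_one]
  exact hlam v

variable {lam : E → ZMod 2}

theorem countP_endsAt_eq_ite (hut : Unitrivalent s t) (hlam : lam ∈ cycleSpace s t) (v : V) :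
    (endsAt s t v).countP (lam · = 1) = if LiesOn s t lam v then 2 else 0 := by
  have heven := even_countP_endsAt hlam v
  have hle : (endsAt s t v).countP (lam · = 1) ≤ degree s t v := Multiset.countP_le_card _ _
  have hdeg := hut v
  rw [liesOn_iff_countP_pos]
  obtain ⟨r, hr⟩ := heven
  split_ifs <;> omega

theorem degree_eq_three_of_liesOn (hut : Unitrivalent s t) (hlam : lam ∈ cycleSpace s t)
    {v : V} (hv : LiesOn s t lam v) : degree s t v = 3 := by
  have hcount := countP_endsAt_eq_ite hut hlam v
  have hle : (endsAt s t v).countP (lam · = 1) ≤ degree s t v := Multiset.countP_le_card _ _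
  rw [if_pos hv] at hcount
  have := hut v
  omega

end Graph

section CommonEnds

variable {s t : E → V} {lam₁ lam₂ : E → ZMod 2}

def commonEnds (s t : E → V) (lam₁ lam₂ : E → ZMod 2) (v : V) : ℕ :=
  (endsAt s t v).countP fun e => lam₁ e = 1 ∧ lam₂ e = 1

theorem ite_liesOn_add_ite_liesOn (hut : Unitrivalent s t) (hlam₁ : lam₁ ∈ cycleSpace s t)
    (hlam₂ : lam₂ ∈ cycleSpace s t) (v : V) :
    (if LiesOn s t lam₁ v then 1 else 0) + (if LiesOn s t lam₂ v then 1 else 0) =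
      (if LiesOn s t (lam₁ + lam₂) v then 1 else 0) + commonEnds s t lam₁ lam₂ v := by
  have h := (endsAt s t v).countP_add_eq_one_add_two_mul lam₁ lam₂
  rw [countP_endsAt_eq_ite hut hlam₁, countP_endsAt_eq_ite hut hlam₂,
    countP_endsAt_eq_ite hut (add_mem hlam₁ hlam₂)] at h
  unfold commonEnds
  split_ifs at h ⊢ <;> omega

theorem commonEnds_le_two (hut : Unitrivalent s t) (hlam₁ : lam₁ ∈ cycleSpace s t)
    (hlam₂ : lam₂ ∈ cycleSpace s t) (v : V) : commonEnds s t lam₁ lam₂ v ≤ 2 := by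
  have h := ite_liesOn_add_ite_liesOn hut hlam₁ hlam₂ v
  split_ifs at h <;> omega

theorem liesOn_of_commonEnds_pos {v : V} (hv : 0 < commonEnds s t lam₁ lam₂ v) :
    LiesOn s t lam₁ v ∧ LiesOn s t lam₂ v := by
  obtain ⟨e, he, h₁, h₂⟩ := Multiset.countP_pos.1 hv
  exact ⟨⟨e, h₁, mem_endsAt.1 he⟩, ⟨e, h₂, mem_endsAt.1 he⟩⟩

theorem sum_liesOn_add_sub_sum_liesOn_sub_sum_liesOn {R : Type*} [CommRing R]
    (hut : Unitrivalent s t) (hlam₁ : lam₁ ∈ cycleSpace s t) (hlam₂ : lam₂ ∈ cycleSpace s t)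
    (X : V → R) :
    ∑ v ∈ univ.filter (LiesOn s t (lam₁ + lam₂)), X v - ∑ v ∈ univ.filter (LiesOn s t lam₁), X v
        - ∑ v ∈ univ.filter (LiesOn s t lam₂), X v =
      -∑ v, (commonEnds s t lam₁ lam₂ v : R) * X v := by
  simp only [sum_filter, ← sum_sub_distrib, ← sum_neg_distrib]
  refine sum_congr rfl fun v _ => ?_
  have h := congrArg (Nat.cast : ℕ → R) (ite_liesOn_add_ite_liesOn hut hlam₁ hlam₂ v)
  push_cast at h
  rw [← boole_mul (LiesOn s t lam₁ v), ← boole_mul (LiesOn s t lam₂ v),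
    ← boole_mul (LiesOn s t (lam₁ + lam₂) v)]
  linear_combination (-X v) * h

theorem even_card_commonEnds_eq_one (hut : Unitrivalent s t) (hlam₁ : lam₁ ∈ cycleSpace s t)
    (hlam₂ : lam₂ ∈ cycleSpace s t) :
    Even #(univ.filter fun v => commonEnds s t lam₁ lam₂ v = 1) := by
  have hsum : ∑ v, commonEnds s t lam₁ lam₂ v =
      2 * #(univ.filter fun e => lam₁ e = 1 ∧ lam₂ e = 1) :=
    sum_countP_endsAt _
  rw [← ZMod.natCast_eq_zero_iff_even, card_filter, Nat.cast_sum]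
  calc ∑ v, ((if commonEnds s t lam₁ lam₂ v = 1 then 1 else 0 : ℕ) : ZMod 2)
      = ∑ v, (commonEnds s t lam₁ lam₂ v : ZMod 2) := sum_congr rfl fun v _ => by
        have := commonEnds_le_two hut hlam₁ hlam₂ v
        generalize commonEnds s t lam₁ lam₂ v = n at this ⊢
        interval_cases n <;> rfl
    _ = 0 := by
        rw [← Nat.cast_sum, hsum]
        exact ZMod.natCast_eq_zero_iff_even.2 (even_two_mul _)

end CommonEnds

section Weights

variable {s t : E → V} {k : ℕ} {j' j : E → ℚ} {lam lam₁ lam₂ : E → ZMod 2}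

theorem eq_level_div_four_of_actW_eq_self (hfix : actW k lam j = j) {f : E} (hf : lam f = 1) :
    j f = k / 4 := by
  have h := congrFun hfix f
  simp only [actW, hf, if_pos] at h
  linarith

theorem exists_int_eq_level_div_two (hw : IsWeight k j) (hfix : actW k lam j = j) {e : E}
    (he : lam e = 1) : ∃ m : ℤ, (k : ℚ) / 2 = m := by
  obtain ⟨m, -, hm⟩ := hw e
  refine ⟨m, ?_⟩
  have := eq_level_div_four_of_actW_eq_self hfix he
  push_cast
  linarith

def excess (s t : E → V) (k : ℕ) (j : E → ℚ) (v : V) : ℚ :=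
  ((endsAt s t v).map j).sum - k / 2

theorem sum_offCycle_eq_excess (hut : Unitrivalent s t) (hlam : lam ∈ cycleSpace s t)
    (hfix : actW k lam j = j) {v : V} (hv : LiesOn s t lam v) :
    ((endsAt s t v).map fun e => if lam e = 1 then 0 else j e).sum = excess s t k j v := by
  have hsplit (e : E) :
      j e = (if lam e = 1 then (k : ℚ) / 4 else 0) + if lam e = 1 then 0 else j e := by
    split_ifs with h
    · rw [eq_level_div_four_of_actW_eq_self hfix h, add_zero]
    · rw [zero_add]
  rw [excess, Multiset.map_congr rfl fun e _ => hsplit e, Multiset.sum_map_add,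
    Multiset.sum_map_ite_eq_countP_nsmul, countP_endsAt_eq_ite hut hlam, if_pos hv, nsmul_eq_mul]
  push_cast
  ring

theorem exists_int_excess (hut : Unitrivalent s t) (hj : j ∈ QCG s t k j')
    (hlam : lam ∈ cycleSpace s t) (hfix : actW k lam j = j) {v : V} (hv : LiesOn s t lam v) :
    ∃ m : ℤ, excess s t k j v = m := by
  obtain ⟨S, hS⟩ := (hj.2.2 v (degree_eq_three_of_liesOn hut hlam hv)).1
  obtain ⟨e, he, -⟩ := hv
  obtain ⟨m, hm⟩ := exists_int_eq_level_div_two hj.1 hfix he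
  exact ⟨S - m, by rw [excess, hS, hm]; push_cast; ring⟩

theorem exists_int_eq_of_liesOn_source (hut : Unitrivalent s t) (hj : j ∈ QCG s t k j')
    (hlam : lam ∈ cycleSpace s t) (hfix : actW k lam j = j) {f : E} (hf : lam f = 0)
    (hv : LiesOn s t lam (s f)) : ∃ m : ℤ, j f = m := by
  have hcount : (endsAt s t (s f)).countP (fun e => ¬ lam e = 1) = 1 := by
    have hcard := Multiset.card_eq_countP_add_countP (fun e => lam e = 1) (endsAt s t (s f))
    have hdeg := degree_eq_three_of_liesOn hut hlam hv
    rw [countP_endsAt_eq_ite hut hlam, if_pos hv] at hcard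
    rw [degree] at hdeg
    omega
  have hoff := Multiset.sum_map_ite_eq_of_countP_eq_one _ (mem_endsAt.2 (Or.inl rfl))
    (by rw [hf]; exact zero_ne_one) hcount j
  simp only [ite_not] at hoff
  rw [← hoff, sum_offCycle_eq_excess hut hlam hfix hv]
  exact exists_int_excess hut hj hlam hfix hv

theorem sum_Ex_modEq_sum_excess (hut : Unitrivalent s t) (hj : j ∈ QCG s t k j')
    (hlam : lam ∈ cycleSpace s t) (hfix : actW k lam j = j) :
    ∑ f ∈ Ex s t lam, j f ≡ ∑ v ∈ univ.filter (LiesOn s t lam), excess s t k j v [PMOD 2] := by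
  set g : V → E → ℚ := fun v e => if LiesOn s t lam v then (if lam e = 1 then 0 else j e) else 0
  have hedge (e : E) :
      (if IsExternal s t lam e then j e else 0) ≡ g (s e) e + g (t e) e [PMOD 2] := by
    have hzmod : ∀ x : ZMod 2, x = 0 ∨ x = 1 := by decide
    rcases hzmod (lam e) with h | h
    · by_cases hs : LiesOn s t lam (s e) <;> by_cases ht : LiesOn s t lam (t e)
      · obtain ⟨m, hm⟩ := exists_int_eq_of_liesOn_source hut hj hlam hfix h hs
        simp only [g, isExternal_iff, hs, ht, h, hm, not_true, and_false, or_self, if_false,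
          if_true, zero_ne_one]
        exact (AddCommGroup.modEq_zero_iff_eq_zsmul.2 ⟨m, by rw [zsmul_eq_mul]; ring⟩).symm
      all_goals simp [g, isExternal_iff, h, hs, ht]
    · simp [g, isExternal_iff, h]
  calc ∑ f ∈ Ex s t lam, j f = ∑ e, if IsExternal s t lam e then j e else 0 := by
        rw [Ex, sum_filter]
    _ ≡ ∑ e, (g (s e) e + g (t e) e) [PMOD 2] := AddCommGroup.ModEq.sum fun e _ => hedge e
    _ = ∑ v, ((endsAt s t v).map (g v)).sum := (sum_sum_endsAt g).symm
    _ = ∑ v ∈ univ.filter (LiesOn s t lam), excess s t k j v := by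
        rw [sum_filter]
        refine sum_congr rfl fun v _ => ?_
        by_cases hv : LiesOn s t lam v
        · simp only [g, if_pos hv, sum_offCycle_eq_excess hut hlam hfix hv]
        · simp [g, hv]

end Weights

section Crossings

variable {s t : E → V} {k : ℕ} {j' j : E → ℚ} {lam₁ lam₂ : E → ZMod 2}

theorem excess_eq_of_commonEnds_eq_one (hut : Unitrivalent s t) (hlam₁ : lam₁ ∈ cycleSpace s t)
    (hlam₂ : lam₂ ∈ cycleSpace s t) (hfix₁ : actW k lam₁ j = j) (hfix₂ : actW k lam₂ j = j)
    {v : V} (hv : commonEnds s t lam₁ lam₂ v = 1) : excess s t k j v = k / 4 := by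
  have hpos : 0 < commonEnds s t lam₁ lam₂ v := by omega
  obtain ⟨hv₁, hv₂⟩ := liesOn_of_commonEnds_pos hpos
  have hunion := (endsAt s t v).countP_or_add_countP_and (lam₁ · = 1) (lam₂ · = 1)
  rw [countP_endsAt_eq_ite hut hlam₁, countP_endsAt_eq_ite hut hlam₂, if_pos hv₁, if_pos hv₂]
    at hunion
  have hdeg := degree_eq_three_of_liesOn hut hlam₁ hv₁
  rw [degree] at hdeg
  have hall : ∀ e ∈ endsAt s t v, lam₁ e = 1 ∨ lam₂ e = 1 := by
    refine Multiset.countP_eq_card.1 ?_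
    unfold commonEnds at hv
    omega
  have hmap : (endsAt s t v).map j = (endsAt s t v).map fun _ => (k : ℚ) / 4 :=
    Multiset.map_congr rfl fun e he => (hall e he).elim
      (eq_level_div_four_of_actW_eq_self hfix₁) (eq_level_div_four_of_actW_eq_self hfix₂)
  rw [excess, hmap, Multiset.map_const', Multiset.sum_replicate, hdeg, nsmul_eq_mul]
  push_cast
  ring

theorem commonEnds_mul_excess_modEq (hut : Unitrivalent s t) (hj : j ∈ QCG s t k j')
    (hlam₁ : lam₁ ∈ cycleSpace s t) (hlam₂ : lam₂ ∈ cycleSpace s t) (hfix₁ : actW k lam₁ j = j)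
    (hfix₂ : actW k lam₂ j = j) (v : V) :
    commonEnds s t lam₁ lam₂ v * excess s t k j v ≡
      if commonEnds s t lam₁ lam₂ v = 1 then (k : ℚ) / 4 else 0 [PMOD 2] := by
  have hle := commonEnds_le_two hut hlam₁ hlam₂ v
  obtain h | h | h : commonEnds s t lam₁ lam₂ v = 0 ∨ commonEnds s t lam₁ lam₂ v = 1 ∨
      commonEnds s t lam₁ lam₂ v = 2 := by omega
  · simp [h]
  · simp [h, excess_eq_of_commonEnds_eq_one hut hlam₁ hlam₂ hfix₁ hfix₂ h]
  · have hpos : 0 < commonEnds s t lam₁ lam₂ v := by omega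
    obtain ⟨m, hm⟩ := exists_int_excess hut hj hlam₁ hfix₁ (liesOn_of_commonEnds_pos hpos).1
    simp only [h, hm, OfNat.ofNat_ne_one, if_false, Nat.cast_ofNat]
    exact AddCommGroup.modEq_zero_iff_eq_zsmul.2 ⟨m, by rw [zsmul_eq_mul]; ring⟩

theorem sum_commonEnds_mul_excess_modEq_zero (hut : Unitrivalent s t) (hj : j ∈ QCG s t k j')
    (hlam₁ : lam₁ ∈ cycleSpace s t) (hlam₂ : lam₂ ∈ cycleSpace s t) (hfix₁ : actW k lam₁ j = j)
    (hfix₂ : actW k lam₂ j = j) :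
    ∑ v, (commonEnds s t lam₁ lam₂ v : ℚ) * excess s t k j v ≡ 0 [PMOD 2] := by
  refine (AddCommGroup.ModEq.sum fun v _ =>
    commonEnds_mul_excess_modEq hut hj hlam₁ hlam₂ hfix₁ hfix₂ v).trans ?_
  rw [← sum_filter, sum_const, nsmul_eq_mul]
  obtain ⟨r, hr⟩ := even_card_commonEnds_eq_one hut hlam₁ hlam₂
  rcases (univ.filter fun v => commonEnds s t lam₁ lam₂ v = 1).eq_empty_or_nonempty
    with hB | ⟨v, hv⟩
  · simp [hB]
  · obtain ⟨-, hv⟩ := mem_filter.1 hv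
    have hpos : 0 < commonEnds s t lam₁ lam₂ v := by omega
    obtain ⟨m, hm⟩ := exists_int_excess hut hj hlam₁ hfix₁ (liesOn_of_commonEnds_pos hpos).1
    rw [excess_eq_of_commonEnds_eq_one hut hlam₁ hlam₂ hfix₁ hfix₂ hv] at hm
    rw [hr, hm]
    exact AddCommGroup.modEq_zero_iff_eq_zsmul.2 ⟨r * m, by rw [zsmul_eq_mul]; push_cast; ring⟩

end Crossings

theorem external_sum_additive_mod_two_general
    (s t : E → V) (k : ℕ) (j' : E → ℚ)
    (hut : Unitrivalent s t)
    (j : E → ℚ) (hj : j ∈ QCG s t k j')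
    (lam₁ : E → ZMod 2) (hlam₁ : lam₁ ∈ cycleSpace s t)
    (lam₂ : E → ZMod 2) (hlam₂ : lam₂ ∈ cycleSpace s t)
    (hfix₁ : actW k lam₁ j = j) (hfix₂ : actW k lam₂ j = j) :
    ∃ m : ℤ, (∑ f ∈ Ex s t (lam₁ + lam₂), j f)
        - (∑ f ∈ Ex s t lam₁, j f) - (∑ f ∈ Ex s t lam₂, j f) = 2 * (m : ℚ) := by
  have hlam : lam₁ + lam₂ ∈ cycleSpace s t := add_mem hlam₁ hlam₂
  have hfix : actW k (lam₁ + lam₂) j = j := by rw [actW_add, hfix₂, hfix₁]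
  have hEx := ((sum_Ex_modEq_sum_excess hut hj hlam hfix).sub
    (sum_Ex_modEq_sum_excess hut hj hlam₁ hfix₁)).sub (sum_Ex_modEq_sum_excess hut hj hlam₂ hfix₂)
  rw [sum_liesOn_add_sub_sum_liesOn_sub_sum_liesOn hut hlam₁ hlam₂] at hEx
  have hcommon := sum_commonEnds_mul_excess_modEq_zero hut hj hlam₁ hlam₂ hfix₁ hfix₂
  obtain ⟨m, hm⟩ := AddCommGroup.modEq_zero_iff_eq_zsmul.1 <|
    hEx.trans <| (AddCommGroup.neg_modEq_neg.2 hcommon).trans (by simp)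
  exact ⟨m, by rw [hm, zsmul_eq_mul, mul_comm]⟩

/-- if `lam₁ · j = j` and `lam₂ · j = j` then
`Σ_{f ∈ Ex(lam₁ + lam₂)} j f − Σ_{f ∈ Ex(lam₁)} j f − Σ_{f ∈ Ex(lam₂)} j f ∈ 2ℤ`. -/
theorem external_sum_additive_mod_two
    (s t : E → V) (k : ℕ) (j' : E → ℚ)
    (hut : Unitrivalent s t) (hk : 0 < k)
    (j : E → ℚ) (hj : j ∈ QCG s t k j')
    (lam₁ : E → ZMod 2) (hlam₁ : lam₁ ∈ cycleSpace s t)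
    (lam₂ : E → ZMod 2) (hlam₂ : lam₂ ∈ cycleSpace s t)
    (hfix₁ : actW k lam₁ j = j) (hfix₂ : actW k lam₂ j = j) :
    ∃ m : ℤ, (∑ f ∈ Ex s t (lam₁ + lam₂), j f)
        - (∑ f ∈ Ex s t lam₁, j f) - (∑ f ∈ Ex s t lam₂, j f) = 2 * (m : ℚ) :=
  external_sum_additive_mod_two_general s t k j' hut j hj lam₁ hlam₁ lam₂ hlam₂ hfix₁ hfix₂
end

section
/- Assume Γ is unitrivalent and k is odd. Then every twisted 1-cocycle δ : Z(Γ) → (QCG_k(Γ; j') → ℂˣ) is a coboundary, and the trivial cocycle δ ≡ 1 satisfies the external edge condition. -/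
open scoped BigOperators

set_option linter.unusedSectionVars false
set_option linter.unreachableTactic false
set_option linter.unusedTactic false

variable {V E : Type*} [Fintype V] [Fintype E] [DecidableEq V] [DecidableEq E]

/-- Auxiliary: if `k` is odd, the action of a nonzero cycle on a weight has no fixed
points. -/
theorem free_action (k : ℕ) (hodd : Odd k) (lam : E → ZMod 2) (j : E → ℚ)
    (hw : IsWeight k j) (hfix : actW k lam j = j) : lam = 0 := by
  funext f
  rcases (by decide : ∀ x : ZMod 2, x = 0 ∨ x = 1) (lam f) with h | h
  · simp [h]
  · exfalso
    have hf := congrFun hfix f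
    simp only [actW, h, if_true] at hf
    obtain ⟨m, hm, hjm⟩ := hw f
    rw [hjm] at hf
    have hk2 : (k : ℚ) = 2 * m := by linarith
    have hk2' : k = 2 * m := by exact_mod_cast hk2
    obtain ⟨n, hn⟩ := hodd
    omega

/-- The orbit relation of the cycle-space action on weights. -/
def relW (s t : E → V) (k : ℕ) (j j₁ : E → ℚ) : Prop :=
  ∃ lam ∈ cycleSpace s t, actW k lam j = j₁

theorem relW_equiv (s t : E → V) (k : ℕ) : Equivalence (relW s t k) := by
  constructor
  · intro j; exact ⟨0, (cycleSpace s t).zero_mem, actW_zero k j⟩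
  · rintro j j₁ ⟨lam, hlam, hact⟩
    refine ⟨lam, hlam, ?_⟩
    rw [← hact, ← actW_add, add_self_zmod2, actW_zero]
  · rintro j j₁ j₂ ⟨lam, hlam, hact⟩ ⟨lam', hlam', hact'⟩
    refine ⟨lam' + lam, (cycleSpace s t).add_mem hlam' hlam, ?_⟩
    rw [actW_add, hact, hact']

/-- if `k` is odd then every twisted 1-cocycle is a coboundary, and the
trivial cocycle `δ ≡ 1` satisfies the external edge condition. -/
theorem odd_level_trivial
    (s t : E → V) (k : ℕ) (j' : E → ℚ)
    (hut : Unitrivalent s t) (hk : 0 < k) (hodd : Odd k) :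
    (∀ δ : (E → ZMod 2) → (E → ℚ) → ℂˣ,
        IsCocycle s t k j' δ → IsCoboundary s t k j' δ) ∧
      ExtCond s t k j' (fun _ _ => 1) := by
  classical
  constructor
  · intro δ hδ
    letI st : Setoid (E → ℚ) := ⟨relW s t k, relW_equiv s t k⟩
    let pick : Quotient st → (E → ℚ) := fun q =>
      if h : ∃ x, x ∈ QCG s t k j' ∧ Quotient.mk st x = q then h.choose else q.out
    let ρ : (E → ℚ) → (E → ℚ) := fun j => pick (Quotient.mk st j)
    have hρQ : ∀ j ∈ QCG s t k j', ρ j ∈ QCG s t k j' := by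
      intro j hj
      have h : ∃ x, x ∈ QCG s t k j' ∧ Quotient.mk st x = Quotient.mk st j :=
        ⟨j, hj, rfl⟩
      simp only [ρ, pick, dif_pos h]
      exact h.choose_spec.1
    have hρrel : ∀ j, relW s t k (ρ j) j := by
      intro j
      by_cases h : ∃ x, x ∈ QCG s t k j' ∧ Quotient.mk st x = Quotient.mk st j
      · simp only [ρ, pick, dif_pos h]
        exact Quotient.exact h.choose_spec.2
      · simp only [ρ, pick, dif_neg h]
        exact Quotient.mk_out j
    have hρconst : ∀ lam ∈ cycleSpace s t, ∀ j, ρ (actW k lam j) = ρ j := by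
      intro lam hlam j
      have : Quotient.mk st (actW k lam j) = Quotient.mk st j :=
        Quotient.sound ((relW_equiv s t k).symm ⟨lam, hlam, rfl⟩)
      simp only [ρ, this]
    let lamOf : (E → ℚ) → (E → ZMod 2) := fun j => (hρrel j).choose
    have hlamOf : ∀ j, lamOf j ∈ cycleSpace s t ∧ actW k (lamOf j) (ρ j) = j :=
      fun j => ⟨(hρrel j).choose_spec.1, (hρrel j).choose_spec.2⟩
    refine ⟨fun j => δ (lamOf j) (ρ j), ?_⟩
    intro lam hlam j hj
    have hr : ρ (actW k lam j) = ρ j := hρconst lam hlam j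
    set r := ρ j with hrdef
    have hrQ : r ∈ QCG s t k j' := hρQ j hj
    set μ := lamOf (actW k lam j) with hμdef
    set ν := lamOf j with hνdef
    have hμZ : μ ∈ cycleSpace s t := (hlamOf _).1
    have hνZ : ν ∈ cycleSpace s t := (hlamOf _).1
    have hμact : actW k μ r = actW k lam j := by
      have := (hlamOf (actW k lam j)).2
      rwa [hr] at this
    have hνact : actW k ν r = j := (hlamOf j).2
    have hsum : actW k (lam + ν) r = actW k lam j := by
      rw [actW_add, hνact]
    have hfix : actW k (μ + (lam + ν)) r = r := by
      rw [actW_add, hsum, ← hμact, ← actW_add, add_self_zmod2, actW_zero]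
    have hμeq : μ = lam + ν := by
      have h0 : μ + (lam + ν) = 0 :=
        free_action k hodd _ r hrQ.1 hfix
      calc μ = μ + (lam + ν) + (lam + ν) := by
              rw [add_assoc, add_self_zmod2, add_zero]
        _ = 0 + (lam + ν) := by rw [h0]
        _ = lam + ν := zero_add _
    have hcoc : δ (lam + ν) r = δ lam (actW k ν r) * δ ν r :=
      hδ lam hlam ν hνZ r hrQ
    rw [hνact] at hcoc
    have hkey : δ μ r = δ lam j * δ ν r := by rw [hμeq, hcoc]
    show δ lam j = δ (lamOf (actW k lam j)) (ρ (actW k lam j)) * (δ (lamOf j) (ρ j))⁻¹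
    rw [hr, ← hrdef]
    show δ lam j = δ μ r * (δ ν r)⁻¹
    rw [hkey]
    group
  · intro lam hlam j hj hfix
    have hlam0 : lam = 0 := free_action k hodd lam j hj.1 hfix
    subst hlam0
    have hEx : Ex s t (0 : E → ZMod 2) = ∅ := by
      ext f
      simp only [Ex, Finset.mem_filter, Finset.mem_univ, true_and,
        Finset.notMem_empty, iff_false]
      rintro ⟨-, hx⟩
      have hno : ¬ LiesOn s t (0 : E → ZMod 2) (s f) := by
        rintro ⟨e, he, -⟩
        simp at he
      have hno' : ¬ LiesOn s t (0 : E → ZMod 2) (t f) := by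
        rintro ⟨e, he, -⟩
        simp at he
      rcases hx with ⟨h1, -⟩ | ⟨h1, -⟩
      · exact hno h1
      · exact hno' h1
    rw [hEx]
    simp
end
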